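/- arXiv:0904.2306 — 5 statements merged into one kernel-verified Lean document; each statement's English description precedes it below -/
import Mathlib

section
/- Let k be a positive integer and let G(V,E) be a finite simple directed graph in which every vertex has positive indegree. If V = V_1 ∪ ... ∪ V_{k+1} is a partition of V into pairwise disjoint sets with η(G,V_1,...,V_{k+1}) < (k+1)·|V|, then there exists a partition V = V'_1 ∪ ... ∪ V'_{k+1} into pairwise disjoint sets with η(G,V'_1,...,V'_{k+1}) > η(G,V_1,...,V_{k+1}). -/
/-- The set of in-neighbors of `v` in the directed graph with adjacency
relation `A` (`A u v` means there is an edge from `u` to `v`). -/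
def inNbr {V : Type*} (A : V → V → Prop) (v : V) : Set V := {u | A u v}

/-- `dClosure A ok S` is the least superset of `S` closed under the coloring
rule: a vertex `v` gets colored white as soon as the number `n` of its white
in-neighbors satisfies the threshold condition `ok v n`. -/
def dClosure {V : Type*} (A : V → V → Prop) (ok : V → ℕ → Prop) (S : Set V) : Set V :=
  ⋂₀ {T : Set V | S ⊆ T ∧ ∀ v, ok v ((inNbr A v ∩ T).ncard) → v ∈ T}

/-- The threshold rule `φ_{k/(k+1)}`: `v` is colored white when at least
`(k/(k+1)) · deg^in(v)` of its in-neighbors are white,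
i.e. `k · deg^in(v) ≤ (k+1) · n`. -/
def fracOk {V : Type*} (A : V → V → Prop) (k : ℕ) (v : V) (n : ℕ) : Prop :=
  k * (inNbr A v).ncard ≤ (k + 1) * n

/-! If the closure of `V \ P i` misses a vertex `v`, then `v ∈ P i`. Some part `P j` is such that
`v` is already colored starting from `(V \ P j) \ {v}`: otherwise, for every `j`, more than a
`1/(k+1)` fraction of the in-neighbours of `v` stay uncolored, and (there being no loops) these
lie in `P j`; summed over the `k + 1` disjoint parts this exceeds the in-degree of `v`.
Moving `v` from `P i` to `P j` then leaves the `j`-th closure unchanged, can only enlarge the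
others, and adds `v` to the `i`-th one. -/

open Function

section Closure

variable {V : Type*} {A : V → V → Prop} {ok : V → ℕ → Prop}

theorem subset_dClosure (S : Set V) : S ⊆ dClosure A ok S :=
  fun _ hx => Set.mem_sInter.2 fun _ hT => hT.1 hx

theorem dClosure_mono {S S' : Set V} (h : S ⊆ S') : dClosure A ok S ⊆ dClosure A ok S' :=
  fun _ hx => Set.mem_sInter.2 fun T hT => Set.mem_sInter.1 hx T ⟨h.trans hT.1, hT.2⟩

theorem dClosure_subset {S T : Set V} (hST : S ⊆ T)
    (hT : ∀ v, ok v ((inNbr A v ∩ T).ncard) → v ∈ T) : dClosure A ok S ⊆ T :=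
  Set.sInter_subset_of_mem ⟨hST, hT⟩

theorem mem_dClosure_of_ok [Finite V] (hok : ∀ v, Monotone (ok v)) {S : Set V} {v : V}
    (h : ok v ((inNbr A v ∩ dClosure A ok S).ncard)) : v ∈ dClosure A ok S :=
  Set.mem_sInter.2 fun _ hT => hT.2 v <|
    hok v (Set.ncard_le_ncard (Set.inter_subset_inter_right _ (Set.sInter_subset_of_mem hT))) h

theorem dClosure_diff_singleton_eq [Finite V] (hok : ∀ v, Monotone (ok v)) {S : Set V} {v : V}
    (h : v ∈ dClosure A ok (S \ {v})) : dClosure A ok (S \ {v}) = dClosure A ok S := by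
  refine (dClosure_mono Set.sdiff_subset).antisymm
    (dClosure_subset (fun x hx => ?_) fun _ => mem_dClosure_of_ok hok)
  by_cases hxv : x = v
  · exact hxv ▸ h
  · exact subset_dClosure _ ⟨hx, hxv⟩

end Closure

section Threshold

variable {V : Type*} {A : V → V → Prop} {k : ℕ}

theorem fracOk_monotone (A : V → V → Prop) (k : ℕ) (v : V) : Monotone (fracOk A k v) :=
  fun _ _ h hn => hn.trans (Nat.mul_le_mul_left _ h)

theorem ncard_inNbr_lt_of_notMem_dClosure [Finite V] {S : Set V} {v : V}
    (hv : v ∉ dClosure A (fracOk A k) S) :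
    (inNbr A v).ncard < (k + 1) * (inNbr A v \ dClosure A (fracOk A k) S).ncard := by
  have hsplit := Set.ncard_inter_add_ncard_sdiff_eq_ncard (inNbr A v) (dClosure A (fracOk A k) S)
  have hnot : (k + 1) * (inNbr A v ∩ dClosure A (fracOk A k) S).ncard < k * (inNbr A v).ncard :=
    not_le.1 fun h => hv (mem_dClosure_of_ok (fracOk_monotone A k) h)
  nlinarith

theorem exists_mem_dClosure_compl_diff_singleton {ι : Type*} [Fintype ι] [Finite V] {v : V}
    (hloop : ¬ A v v) (hι : k + 1 ≤ Fintype.card ι) {P : ι → Set V}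
    (hP : Pairwise (Disjoint on P)) : ∃ j, v ∈ dClosure A (fracOk A k) ((P j)ᶜ \ {v}) := by
  by_contra! h
  set N := inNbr A v
  set B : ι → Set V := fun j => N \ dClosure A (fracOk A k) ((P j)ᶜ \ {v})
  have hBP : ∀ j, B j ⊆ P j := fun j w ⟨hw, hwC⟩ => by
    by_contra hwP
    exact hwC (subset_dClosure _ ⟨hwP, fun hwv => hloop (by rwa [hwv] at hw)⟩)
  have hB : ∑ j, (B j).ncard ≤ N.ncard := by
    rw [← finsum_eq_sum_of_fintype, ← Set.ncard_iUnion_of_finite (fun _ => Set.toFinite _)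
      fun i j hij => (hP hij).mono (hBP i) (hBP j)]
    exact Set.ncard_le_ncard (Set.iUnion_subset fun _ => Set.sdiff_subset)
  have : Nonempty ι := Fintype.card_pos_iff.1 (by omega)
  have hN : Fintype.card ι * N.ncard < (k + 1) * ∑ j, (B j).ncard := by
    rw [Finset.mul_sum, ← smul_eq_mul, ← Finset.card_univ, ← Finset.sum_const]
    exact Finset.sum_lt_sum_of_nonempty Finset.univ_nonempty
      fun j _ => ncard_inNbr_lt_of_notMem_dClosure (h j)
  nlinarith [Nat.mul_le_mul_left (k + 1) hB, Nat.mul_le_mul_right N.ncard hι]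

end Threshold

section Move

variable {ι V : Type*} {P : ι → Set V} {v : V} {j : ι}

def moveVertex (P : ι → Set V) (v : V) (j : ι) (l : ι) : Set V :=
  {x | x = v ∧ l = j ∨ x ≠ v ∧ x ∈ P l}

theorem compl_moveVertex_self : (moveVertex P v j j)ᶜ = (P j)ᶜ \ {v} := by
  ext x
  simp only [moveVertex, Set.mem_compl_iff, Set.mem_ofPred_eq, Set.mem_sdiff, Set.mem_singleton_iff]
  tauto

theorem compl_moveVertex_of_ne {l : ι} (h : l ≠ j) :
    (moveVertex P v j l)ᶜ = insert v (P l)ᶜ := by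
  ext x
  simp only [moveVertex, Set.mem_compl_iff, Set.mem_ofPred_eq, Set.mem_insert_iff]
  tauto

theorem pairwise_disjoint_moveVertex (hP : Pairwise (Disjoint on P)) :
    Pairwise (Disjoint on moveVertex P v j) := by
  rintro l m hlm
  refine Set.disjoint_left.2 fun x hl hm => ?_
  rcases hl with ⟨rfl, rfl⟩ | ⟨hxv, hxl⟩
  · exact hm.elim (fun h => hlm h.2.symm) fun h => h.1 rfl
  · exact hm.elim (fun h => hxv h.1) fun h => Set.disjoint_left.1 (hP hlm) hxl h.2

theorem iUnion_moveVertex (hP : ⋃ l, P l = Set.univ) : ⋃ l, moveVertex P v j l = Set.univ := by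
  refine Set.eq_univ_of_forall fun x => Set.mem_iUnion.2 ?_
  by_cases hxv : x = v
  · exact ⟨j, .inl ⟨hxv, rfl⟩⟩
  · obtain ⟨l, hl⟩ := Set.mem_iUnion.1 (hP ▸ Set.mem_univ x)
    exact ⟨l, .inr ⟨hxv, hl⟩⟩

theorem sum_ncard_dClosure_compl_lt_moveVertex [Fintype ι] [Finite V] {A : V → V → Prop}
    {ok : V → ℕ → Prop} (hok : ∀ v, Monotone (ok v)) {i : ι}
    (hi : v ∉ dClosure A ok (P i)ᶜ) (hj : v ∈ dClosure A ok ((P j)ᶜ \ {v})) :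
    ∑ l, (dClosure A ok (P l)ᶜ).ncard < ∑ l, (dClosure A ok (moveVertex P v j l)ᶜ).ncard := by
  have hji : j ≠ i := by
    rintro rfl
    exact hi (dClosure_mono Set.sdiff_subset hj)
  have hle : ∀ l, dClosure A ok (P l)ᶜ ⊆ dClosure A ok (moveVertex P v j l)ᶜ := by
    intro l
    rcases eq_or_ne l j with rfl | hl
    · rw [compl_moveVertex_self, dClosure_diff_singleton_eq hok hj]
    · rw [compl_moveVertex_of_ne hl]
      exact dClosure_mono (Set.subset_insert _ _)
  refine Finset.sum_lt_sum (fun l _ => Set.ncard_le_ncard (hle l))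
    ⟨i, Finset.mem_univ _, Set.ncard_lt_ncard ((Set.ssubset_iff_of_subset (hle i)).2 ⟨v, ?_, hi⟩)⟩
  rw [compl_moveVertex_of_ne hji.symm]
  exact subset_dClosure _ (Set.mem_insert _ _)

end Move

theorem stmt1_general {V : Type*} [Fintype V] (A : V → V → Prop)
    (hsimple : ∀ v, ¬ A v v)
    (k : ℕ)
    (P : Fin (k + 1) → Set V)
    (hdisj : ∀ i j, i ≠ j → Disjoint (P i) (P j))
    (hcover : (⋃ i, P i) = Set.univ)
    (hlt : ∑ i : Fin (k + 1), (dClosure A (fracOk A k) (Set.univ \ P i)).ncard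
        < (k + 1) * Fintype.card V) :
    ∃ Q : Fin (k + 1) → Set V,
      (∀ i j, i ≠ j → Disjoint (Q i) (Q j)) ∧ (⋃ i, Q i) = Set.univ ∧
      ∑ i : Fin (k + 1), (dClosure A (fracOk A k) (Set.univ \ P i)).ncard
        < ∑ i : Fin (k + 1), (dClosure A (fracOk A k) (Set.univ \ Q i)).ncard := by
  simp only [← Set.compl_eq_univ_sdiff] at hlt ⊢
  obtain ⟨i, -, hi⟩ : ∃ i ∈ Finset.univ, (dClosure A (fracOk A k) (P i)ᶜ).ncard < Fintype.card V :=
    Finset.exists_lt_of_sum_lt <| by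
    rwa [Finset.sum_const, Finset.card_univ, Fintype.card_fin, smul_eq_mul]
  obtain ⟨v, hv⟩ : ∃ v, v ∉ dClosure A (fracOk A k) (P i)ᶜ := by
    by_contra! h
    rw [Set.eq_univ_of_forall h, Set.ncard_univ, Nat.card_eq_fintype_card] at hi
    exact lt_irrefl _ hi
  obtain ⟨j, hj⟩ := exists_mem_dClosure_compl_diff_singleton (hsimple v) (Fintype.card_fin (k + 1)).ge hdisj
  exact ⟨moveVertex P v j, pairwise_disjoint_moveVertex hdisj, iUnion_moveVertex hcover,
    sum_ncard_dClosure_compl_lt_moveVertex (fracOk_monotone A k) hv hj⟩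

/-- Lemma 2: if a partition does not attain the maximal potential
`η = (k+1)·|V|`, then there is a partition of strictly larger potential. -/
theorem stmt1 {V : Type*} [Fintype V] (A : V → V → Prop)
    (hsimple : ∀ v, ¬ A v v) (hindeg : ∀ v : V, ∃ u, A u v)
    (k : ℕ) (hk : 0 < k)
    (P : Fin (k + 1) → Set V)
    (hdisj : ∀ i j, i ≠ j → Disjoint (P i) (P j))
    (hcover : (⋃ i, P i) = Set.univ)
    (hlt : ∑ i : Fin (k + 1), (dClosure A (fracOk A k) (Set.univ \ P i)).ncard
        < (k + 1) * Fintype.card V) :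
    ∃ Q : Fin (k + 1) → Set V,
      (∀ i j, i ≠ j → Disjoint (Q i) (Q j)) ∧ (⋃ i, Q i) = Set.univ ∧
      ∑ i : Fin (k + 1), (dClosure A (fracOk A k) (Set.univ \ P i)).ncard
        < ∑ i : Fin (k + 1), (dClosure A (fracOk A k) (Set.univ \ Q i)).ncard :=
  stmt1_general A hsimple k P hdisj hcover hlt
end

section
/- Let G(V,E) be a finite simple undirected connected graph, (S, V\S) a proper cut, G'(V',E') a connected component of G[S], and v ∈ V'. Then B(S\{v}) ⊆ B(S) \ {G'}; that is, every bad connected component of G[S\{v}] with respect to the cut (S\{v}, (V\S)∪{v}) is a bad connected component of G[S] with respect to (S, V\S) other than G'. -/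
/-- The size `e(S, V\S)` of the cut `(S, V\S)`: the number of edges of `G`
with one endpoint in `S` and the other outside `S` (each such edge is counted
once, as the ordered pair whose first coordinate lies in `S`). -/
noncomputable def cutE {V : Type*} (G : SimpleGraph V) (S : Set V) : ℕ :=
  {p : V × V | G.Adj p.1 p.2 ∧ p.1 ∈ S ∧ p.2 ∉ S}.ncard

/-- `v` is bad with respect to the cut `(S, V\S)`:
`|N(v) ∩ S| = |N(v) \ S|`. -/
def badVtx {V : Type*} (G : SimpleGraph V) (S : Set V) (v : V) : Prop :=
  (G.neighborSet v ∩ S).ncard = (G.neighborSet v \ S).ncard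

/-- The cut `(S, V\S)` is proper: no vertex has more neighbors on its own side
than on the other side. -/
def properCut {V : Type*} (G : SimpleGraph V) (S : Set V) : Prop :=
  (∀ v ∈ S, (G.neighborSet v ∩ S).ncard ≤ (G.neighborSet v \ S).ncard) ∧
  (∀ v ∉ S, (G.neighborSet v \ S).ncard ≤ (G.neighborSet v ∩ S).ncard)

/-- The vertex sets of the connected components of the induced subgraph `G[S]`,
viewed as subsets of `V`. -/
def comps {V : Type*} (G : SimpleGraph V) (S : Set V) : Set (Set V) :=
  {C | ∃ c : (G.induce S).ConnectedComponent, C = Subtype.val '' c.supp}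

/-- `badComps G S` is `B(S)`: the set of connected components of `G[S]` all of
whose vertices are bad with respect to the cut `(S, V\S)`. -/
def badComps {V : Type*} (G : SimpleGraph V) (S : Set V) : Set (Set V) :=
  {C | C ∈ comps G S ∧ ∀ v ∈ C, badVtx G S v}

/-- `dSet G v U = d(v, U) = min_{u ∈ U} d(v, u)`. -/
noncomputable def dSet {V : Type*} (G : SimpleGraph V) (v : V) (U : Set V) : ℕ :=
  sInf ((G.dist v) '' U)

/-- The potential `ψ(S, v*) = e(S, V\S)·|V|² −
[Σ_{Ĥ ∈ B(S)} d(v*, V̂) + Σ_{Ĥ ∈ B(V\S)} d(v*, V̂)]`. -/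
noncomputable def psi {V : Type*} [Fintype V] (G : SimpleGraph V) (S : Set V) (vs : V) : ℤ :=
  (cutE G S : ℤ) * (Fintype.card V : ℤ) ^ 2
    - ((∑ᶠ C ∈ badComps G S, (dSet G vs C : ℤ))
      + ∑ᶠ C ∈ badComps G Sᶜ, (dSet G vs C : ℤ))

/-! A vertex `u` of a component `C` of `G[S \ {v}]` that is adjacent to `v` sees one more
neighbour outside and one fewer inside after `v` changes sides; as the cut was proper at `u`, `u`
cannot be balanced afterwards. So no vertex of a bad `C` is adjacent to `v`: then `C` is closed in
`G[S]`, hence a component of `G[S]`, its vertices have the same neighbourhood counts for `S` as for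
`S \ {v}`, and `C` misses `v ∈ V'`. -/

theorem SimpleGraph.Reachable.mem_of_adj_closed {W : Type*} {H : SimpleGraph W} {P : Set W}
    (hP : ∀ x y, H.Adj x y → x ∈ P → y ∈ P) {x y : W} (hxy : H.Reachable x y) (hx : x ∈ P) :
    y ∈ P := by
  obtain ⟨p⟩ := hxy
  induction p with
  | nil => exact hx
  | cons hadj _ ih => exact ih (hP _ _ hadj hx)

section

variable {V : Type*} {G : SimpleGraph V}

theorem subset_of_mem_comps {T C : Set V} (hC : C ∈ comps G T) : C ⊆ T := by
  obtain ⟨c, rfl⟩ := hC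
  rintro _ ⟨x, -, rfl⟩
  exact x.2

theorem mem_comps_of_subset {S T C : Set V} (hTS : T ⊆ S) (hC : C ∈ comps G T)
    (hclosed : ∀ u ∈ C, ∀ w ∈ S, G.Adj u w → w ∈ T) : C ∈ comps G S := by
  obtain ⟨c, rfl⟩ := hC
  obtain ⟨u₀, hu₀⟩ := c.nonempty_supp
  refine ⟨(G.induce S).connectedComponentMk (Set.inclusion hTS u₀), Set.Subset.antisymm ?_ ?_⟩
  · rintro _ ⟨u, hu, rfl⟩
    exact ⟨Set.inclusion hTS u, SimpleGraph.ConnectedComponent.sound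
      ((c.reachable_of_mem_supp hu hu₀).map (G.induceHomOfLE hTS).toHom), rfl⟩
  · rintro _ ⟨w, hw, rfl⟩
    have hreach : (G.induce S).Reachable (Set.inclusion hTS u₀) w :=
      (SimpleGraph.ConnectedComponent.exact hw).symm
    refine hreach.mem_of_adj_closed (P := {x : S | x.val ∈ Subtype.val '' c.supp})
      ?_ ⟨u₀, hu₀, rfl⟩
    rintro ⟨x, hxS⟩ y hxy ⟨u, hu, rfl⟩
    have hyT : y.val ∈ T := hclosed u ⟨u, hu, rfl⟩ y y.2 hxy
    exact ⟨⟨y, hyT⟩, c.mem_supp_of_adj_mem_supp hu hxy, rfl⟩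

theorem badVtx_diff_singleton_iff {S : Set V} {u v : V} (huv : ¬G.Adj u v) :
    badVtx G (S \ {v}) u ↔ badVtx G S u := by
  have hv : G.neighborSet u ∩ {v} = ∅ := Set.inter_singleton_eq_empty.mpr huv
  unfold badVtx
  rw [← Set.inter_sdiff_assoc, Set.sdiff_sdiff_right, hv, Set.union_empty,
    Set.sdiff_singleton_eq_self (fun h => huv h.1)]

theorem not_adj_of_badVtx_diff_singleton {S : Set V} {u v : V} (hfin : (G.neighborSet u).Finite)
    (hvS : v ∈ S) (hu : (G.neighborSet u ∩ S).ncard ≤ (G.neighborSet u \ S).ncard)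
    (hbad : badVtx G (S \ {v}) u) : ¬G.Adj u v := by
  intro huv
  have hin : (G.neighborSet u ∩ (S \ {v})).ncard + 1 = (G.neighborSet u ∩ S).ncard := by
    rw [← Set.inter_sdiff_assoc]
    exact Set.ncard_sdiff_singleton_add_one ⟨huv, hvS⟩ (hfin.subset Set.inter_subset_left)
  have hout : (G.neighborSet u \ (S \ {v})).ncard = (G.neighborSet u \ S).ncard + 1 := by
    rw [Set.sdiff_sdiff_right, Set.inter_singleton_of_mem (show v ∈ G.neighborSet u from huv),
      Set.union_singleton]
    exact Set.ncard_insert_of_notMem (fun h => h.2 hvS) (hfin.subset Set.sdiff_subset)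
  unfold badVtx at hbad
  omega

end

theorem stmt9_general {V : Type*} [Fintype V] (G : SimpleGraph V)
    (S : Set V) (hproper : properCut G S)
    (V' : Set V) (hV' : V' ∈ comps G S) (v : V) (hv : v ∈ V') :
    badComps G (S \ {v}) ⊆ badComps G S \ {V'} := by
  have hvS : v ∈ S := subset_of_mem_comps hV' hv
  rintro C ⟨hC, hbad⟩
  have hCS : C ⊆ S \ {v} := subset_of_mem_comps hC
  have hnadj : ∀ u ∈ C, ¬G.Adj u v := fun u hu =>
    not_adj_of_badVtx_diff_singleton (Set.toFinite _) hvS (hproper.1 u (hCS hu).1) (hbad u hu)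
  refine ⟨⟨mem_comps_of_subset Set.sdiff_subset hC ?_, ?_⟩, ?_⟩
  · rintro u hu w hwS huw
    exact ⟨hwS, fun hwv => hnadj u hu (hwv ▸ huw)⟩
  · exact fun u hu => (badVtx_diff_singleton_iff (hnadj u hu)).mp (hbad u hu)
  · rintro rfl
    exact (hCS hv).2 rfl

/-- Lemma: for a proper cut `(S, V\S)`, a connected component `G'(V',E')` of
`G[S]` and `v ∈ V'`, every bad component of `G[S\{v}]` (w.r.t. the cut
`(S\{v}, (V\S)∪{v})`) is a bad component of `G[S]` (w.r.t. `(S, V\S)`)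
other than `G'`. -/
theorem stmt9 {V : Type*} [Fintype V] (G : SimpleGraph V) (hconn : G.Connected)
    (S : Set V) (hproper : properCut G S)
    (V' : Set V) (hV' : V' ∈ comps G S) (v : V) (hv : v ∈ V') :
    badComps G (S \ {v}) ⊆ badComps G S \ {V'} :=
  stmt9_general G S hproper V' hV' v hv
end

section
/- Let G(V,E) be a finite simple undirected connected graph, (S, V\S) a proper cut, v ∈ S, v* ∈ V, and let Ḡ(V̄,Ē) be the connected component of G[(V\S) ∪ {v}] that contains v. Then Σ_{Ĥ(V̂,Ê)∈B((V\S)∪{v})} d(v*, V̂) ≤ (Σ_{Ĥ(V̂,Ê)∈B(V\S)} d(v*, V̂)) + d(v*, V̄). -/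
namespace SimpleGraph

variable {V : Type*} (G : SimpleGraph V)

lemma subset_of_mem_comps {t C : Set V} (hC : C ∈ comps G t) : C ⊆ t := by
  obtain ⟨c, rfl⟩ := hC
  rintro _ ⟨x, -, rfl⟩
  exact x.2

lemma mem_of_adj_of_mem_comps {t C : Set V} (hC : C ∈ comps G t) {x y : V} (hx : x ∈ C)
    (hy : y ∈ t) (hxy : G.Adj x y) : y ∈ C := by
  obtain ⟨c, rfl⟩ := hC
  obtain ⟨x, hxc, rfl⟩ := hx
  exact ⟨⟨y, hy⟩, c.mem_supp_of_adj_mem_supp hxc (induce_adj.2 hxy), rfl⟩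

lemma eq_of_mem_comps {t C D : Set V} (hC : C ∈ comps G t) (hD : D ∈ comps G t) {x : V}
    (hxC : x ∈ C) (hxD : x ∈ D) : C = D := by
  obtain ⟨c, rfl⟩ := hC
  obtain ⟨d, rfl⟩ := hD
  obtain ⟨y, hyc, rfl⟩ := hxC
  obtain ⟨z, hzd, hzy⟩ := hxD
  obtain rfl : z = y := Subtype.ext hzy
  rw [ConnectedComponent.mem_supp_iff] at hyc hzd
  rw [← hyc, ← hzd]

lemma mem_comps_of_subset {s t C : Set V} (hst : s ⊆ t) (hC : C ∈ comps G t) (hCs : C ⊆ s) :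
    C ∈ comps G s := by
  classical
  obtain ⟨c, rfl⟩ := hC
  obtain ⟨u, rfl⟩ := c.exists_rep
  have hus : u.1 ∈ s := hCs ⟨u, rfl, rfl⟩
  refine ⟨(G.induce s).connectedComponentMk ⟨u, hus⟩, Set.Subset.antisymm ?_ ?_⟩
  · rintro _ ⟨y, hy, rfl⟩
    obtain ⟨p⟩ := ConnectedComponent.exact hy
    -- every vertex of a walk to `u` lies in the component of `u`, hence in `s`
    have hps : ∀ z ∈ (p.map (Embedding.induce t).toHom).support, z ∈ s := by
      intro z hz
      obtain ⟨w, hw, rfl⟩ := List.mem_map.1 (by simpa only [Walk.support_map] using hz)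
      exact hCs ⟨w, ConnectedComponent.sound (p.dropUntil w hw).reachable, rfl⟩
    exact ⟨_, ConnectedComponent.sound ((p.map _).induce s hps).reachable, rfl⟩
  · rintro _ ⟨y, hy, rfl⟩
    obtain ⟨p⟩ := ConnectedComponent.exact hy
    exact ⟨_, ConnectedComponent.sound (p.map (G.induceHomOfLE hst).toHom).reachable, rfl⟩

lemma badVtx_congr {s t : Set V} {x : V} (h : G.neighborSet x ∩ s = G.neighborSet x ∩ t) :
    badVtx G s x ↔ badVtx G t x := by
  unfold badVtx
  rw [← Set.sdiff_self_inter, h, Set.sdiff_self_inter]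

lemma mem_badComps_of_mem_badComps_union_singleton {s C : Set V} {v : V}
    (hC : C ∈ badComps G (s ∪ {v})) (hvC : v ∉ C) : C ∈ badComps G s := by
  obtain ⟨hCc, hbad⟩ := hC
  have hCs : C ⊆ s := fun x hx =>
    (subset_of_mem_comps G hCc hx).resolve_right fun hxv => hvC (hxv ▸ hx)
  refine ⟨mem_comps_of_subset G Set.subset_union_left hCc hCs, fun x hx => ?_⟩
  have hxv : ¬G.Adj x v := fun hxv =>
    hvC (mem_of_adj_of_mem_comps G hCc hx (Set.mem_union_right _ rfl) hxv)
  refine (badVtx_congr G ?_).1 (hbad x hx)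
  rw [Set.inter_union_distrib_left,
    (Set.inter_singleton_eq_empty (s := G.neighborSet x)).2 hxv, Set.union_empty]

end SimpleGraph

lemma finsum_mem_le_add_of_subset_insert {α M : Type*} [AddCommMonoid M] [PartialOrder M]
    [CanonicallyOrderedAdd M] {A B : Set α} (hB : B.Finite) {a : α} (hAB : A ⊆ insert a B)
    (f : α → M) : ∑ᶠ x ∈ A, f x ≤ ∑ᶠ x ∈ B, f x + f a := by
  have hA := (hB.insert a).subset hAB
  calc ∑ᶠ x ∈ A, f x ≤ ∑ᶠ x ∈ insert a B, f x := by
        rw [finsum_mem_eq_finite_toFinset_sum _ hA,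
          finsum_mem_eq_finite_toFinset_sum _ (hB.insert a)]
        exact Finset.sum_le_sum_of_subset (Set.Finite.toFinset_subset_toFinset.2 hAB)
    _ ≤ ∑ᶠ x ∈ B, f x + f a := by
        by_cases ha : a ∈ B
        · rw [Set.insert_eq_of_mem ha]
          exact le_self_add
        · rw [finsum_mem_insert f ha hB, add_comm]

theorem stmt12_general {V : Type*} [Fintype V] (G : SimpleGraph V)
    (S : Set V) (v : V) (vs : V)
    (VBar : Set V) (hVBar : VBar ∈ comps G (Sᶜ ∪ {v})) (hvBar : v ∈ VBar) :
    (∑ᶠ C ∈ badComps G (Sᶜ ∪ {v}), dSet G vs C)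
      ≤ (∑ᶠ C ∈ badComps G Sᶜ, dSet G vs C) + dSet G vs VBar := by
  refine finsum_mem_le_add_of_subset_insert (Set.toFinite _) (fun C hC => ?_) _
  by_cases hvC : v ∈ C
  · exact Or.inl (G.eq_of_mem_comps hC.1 hVBar hvC hvBar)
  · exact Or.inr (G.mem_badComps_of_mem_badComps_union_singleton hC hvC)

/-- Corollary: moving `v ∈ S` to the other side of a proper cut increases the
sum of distances to bad components of the complement side by at most
`d(v*, V̄)`, where `Ḡ(V̄,Ē)` is the component of `G[(V\S)∪{v}]` containing
`v`. -/
theorem stmt12 {V : Type*} [Fintype V] (G : SimpleGraph V) (hconn : G.Connected)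
    (S : Set V) (hproper : properCut G S) (v : V) (hv : v ∈ S) (vs : V)
    (VBar : Set V) (hVBar : VBar ∈ comps G (Sᶜ ∪ {v})) (hvBar : v ∈ VBar) :
    (∑ᶠ C ∈ badComps G (Sᶜ ∪ {v}), dSet G vs C)
      ≤ (∑ᶠ C ∈ badComps G Sᶜ, dSet G vs C) + dSet G vs VBar :=
  stmt12_general G S v vs VBar hVBar hvBar
end

section
/- Let G(V,E) be a finite simple undirected graph and let 𝒢(𝒱,ℰ) be the graph constructed from G as described. If D ⊆ V is a dominating set of G, then c(D ∪ {z_1, z_2}, 𝒢, φ^strict) = 𝒱; that is, D ∪ {z_1, z_2} is an irreversible dynamo of 𝒢 under the strict-majority scenario. -/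
/-!
The coloring spreads in layers. Every `y` has the three neighbors `w_v, z₁, z₂`, two of them
seeds, so all of `𝒴` turns white, and `g₁, g₂` follow their only neighbors `z₁, z₂`. Next, `w_v`
has `2 deg(v) + 1` neighbors, among them the `deg(v)` white vertices of `𝒴_v` and a seed from
`N*(v)` (as `D` dominates), so all of `𝒲` turns white. Then every `v ∈ V` has `2 deg(v) + 1`
neighbors, `deg(v) + 1` of them in `𝒲`, and finally each `x` follows its only neighbor.
-/

/-- The degree `deg_G(v)` of `v` in `G`, as the cardinality of its
neighborhood. -/
noncomputable def deg {V : Type*} (G : SimpleGraph V) (v : V) : ℕ :=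
  (G.neighborSet v).ncard

/-- `u ∈ N*_G(v) = N_G(v) ∪ {v}`. -/
def closedNbr {V : Type*} (G : SimpleGraph V) (v u : V) : Prop :=
  G.Adj v u ∨ u = v

/-- The vertex set `𝒱 = V ∪ 𝒲 ∪ 𝒳 ∪ 𝒴 ∪ {z₁,z₂} ∪ {g₁,g₂}` of the graph
`𝒢` constructed from `G`: for each `v ∈ V` there are fresh vertices `w v`,
`x v i` for `i < deg_G(v)` (the set `𝒳_v`) and `y v i` for `i < deg_G(v)`
(the set `𝒴_v`), plus four further fresh vertices `z₁, z₂, g₁, g₂`. -/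
inductive CalV {V : Type*} (G : SimpleGraph V) where
  | orig (v : V)
  | w (v : V)
  | x (v : V) (i : Fin (deg G v))
  | y (v : V) (i : Fin (deg G v))
  | z1
  | z2
  | g1
  | g2

/-- The edges `ℰ` of `𝒢`, as a base relation: `(v, x)` for `x ∈ 𝒳_v`;
`(w_v, u)` for `u ∈ N*_G(v)`; `(w_v, y)` for `y ∈ 𝒴_v`; `(y, z₁)` and
`(y, z₂)` for `y ∈ 𝒴`; `(z₁, g₁)`; `(z₂, g₂)`. -/
inductive CalRel {V : Type*} (G : SimpleGraph V) : CalV G → CalV G → Prop where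
  | vx (v : V) (i : Fin (deg G v)) : CalRel G (.orig v) (.x v i)
  | wu (v u : V) (h : closedNbr G v u) : CalRel G (.w v) (.orig u)
  | wy (v : V) (i : Fin (deg G v)) : CalRel G (.w v) (.y v i)
  | yz1 (v : V) (i : Fin (deg G v)) : CalRel G (.y v i) .z1
  | yz2 (v : V) (i : Fin (deg G v)) : CalRel G (.y v i) .z2
  | zg1 : CalRel G .z1 .g1
  | zg2 : CalRel G .z2 .g2

/-- The graph `𝒢(𝒱, ℰ)` constructed from `G`. -/
noncomputable def CalG {V : Type*} (G : SimpleGraph V) : SimpleGraph (CalV G) :=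
  SimpleGraph.fromRel (CalRel G)

/-- `strictClosure H S` is `c(S, H, φ^strict)`: the least superset of `S`
closed under the strict-majority coloring rule, by which a vertex is colored
white whenever more than half of its neighbors are white. -/
def strictClosure {W : Type*} (H : SimpleGraph W) (S : Set W) : Set W :=
  ⋂₀ {T : Set W | S ⊆ T ∧
    ∀ v, (H.neighborSet v).ncard < 2 * (H.neighborSet v ∩ T).ncard → v ∈ T}

section StrictClosure

variable {W : Type*} {H : SimpleGraph W} {S : Set W}

theorem subset_strictClosure : S ⊆ strictClosure H S :=
  Set.subset_sInter fun _ hT => hT.1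

theorem mem_strictClosure_of_lt_ncard {v : W} {A : Set W}
    (hfin : (H.neighborSet v).Finite) (hAN : A ⊆ H.neighborSet v)
    (hAS : A ⊆ strictClosure H S) (hlt : (H.neighborSet v).ncard < 2 * A.ncard) :
    v ∈ strictClosure H S := by
  refine Set.mem_sInter.2 fun T ⟨hST, hT⟩ => hT v (hlt.trans_le ?_)
  have hAT : A ⊆ H.neighborSet v ∩ T :=
    Set.subset_inter hAN (hAS.trans (Set.sInter_subset_of_mem ⟨hST, hT⟩))
  exact Nat.mul_le_mul_left 2 (Set.ncard_le_ncard hAT (hfin.subset Set.inter_subset_left))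

theorem mem_strictClosure_of_neighborSet_eq_singleton {v a : W}
    (hv : H.neighborSet v = {a}) (ha : a ∈ strictClosure H S) :
    v ∈ strictClosure H S :=
  mem_strictClosure_of_lt_ncard (hv ▸ Set.finite_singleton a) hv.ge
    (Set.singleton_subset_iff.2 ha) (by simp [hv])

end StrictClosure

section CalG

variable {V : Type*} {G : SimpleGraph V}

theorem closedNbr_comm {u v : V} : closedNbr G u v ↔ closedNbr G v u := by
  unfold closedNbr
  rw [G.adj_comm, eq_comm]

theorem setOf_closedNbr (v : V) : {u | closedNbr G v u} = insert v (G.neighborSet v) := by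
  ext u
  simp only [closedNbr, Set.mem_insert_iff, SimpleGraph.mem_neighborSet]
  exact or_comm

theorem ncard_setOf_closedNbr [Finite V] (v : V) :
    {u | closedNbr G v u}.ncard = deg G v + 1 := by
  rw [setOf_closedNbr, Set.ncard_insert_of_notMem (by simp)]
  rfl

instance [Finite V] : Finite (CalV G) := by
  let f : (V ⊕ V) ⊕ ((Σ v, Fin (deg G v)) ⊕ (Σ v, Fin (deg G v))) ⊕ Fin 4 → CalV G
    | .inl (.inl v) => .orig v
    | .inl (.inr v) => .w v
    | .inr (.inl (.inl ⟨v, i⟩)) => .x v i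
    | .inr (.inl (.inr ⟨v, i⟩)) => .y v i
    | .inr (.inr k) => ![.z1, .z2, .g1, .g2] k
  refine Finite.of_surjective f fun c => ?_
  cases c with
  | orig v => exact ⟨.inl (.inl v), rfl⟩
  | w v => exact ⟨.inl (.inr v), rfl⟩
  | x v i => exact ⟨.inr (.inl (.inl ⟨v, i⟩)), rfl⟩
  | y v i => exact ⟨.inr (.inl (.inr ⟨v, i⟩)), rfl⟩
  | z1 => exact ⟨.inr (.inr 0), rfl⟩
  | z2 => exact ⟨.inr (.inr 1), rfl⟩
  | g1 => exact ⟨.inr (.inr 2), rfl⟩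
  | g2 => exact ⟨.inr (.inr 3), rfl⟩

theorem calG_adj {a b : CalV G} :
    (CalG G).Adj a b ↔ a ≠ b ∧ (CalRel G a b ∨ CalRel G b a) :=
  SimpleGraph.fromRel_adj _ _ _

theorem neighborSet_g1 : (CalG G).neighborSet .g1 = {.z1} := by
  ext c
  simp only [SimpleGraph.mem_neighborSet, calG_adj, Set.mem_singleton_iff]
  constructor
  · rintro ⟨-, h | h⟩ <;> cases h
    rfl
  · rintro rfl
    exact ⟨nofun, .inr .zg1⟩

theorem neighborSet_g2 : (CalG G).neighborSet .g2 = {.z2} := by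
  ext c
  simp only [SimpleGraph.mem_neighborSet, calG_adj, Set.mem_singleton_iff]
  constructor
  · rintro ⟨-, h | h⟩ <;> cases h
    rfl
  · rintro rfl
    exact ⟨nofun, .inr .zg2⟩

theorem neighborSet_x (v : V) (i : Fin (deg G v)) :
    (CalG G).neighborSet (.x v i) = {.orig v} := by
  ext c
  simp only [SimpleGraph.mem_neighborSet, calG_adj, Set.mem_singleton_iff]
  constructor
  · rintro ⟨-, h | h⟩ <;> cases h
    rfl
  · rintro rfl
    exact ⟨nofun, .inr (.vx v i)⟩

theorem neighborSet_y (v : V) (i : Fin (deg G v)) :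
    (CalG G).neighborSet (.y v i) = {.w v, .z1, .z2} := by
  ext c
  simp only [SimpleGraph.mem_neighborSet, calG_adj, Set.mem_insert_iff,
    Set.mem_singleton_iff]
  constructor
  · rintro ⟨-, h | h⟩ <;> cases h <;> simp
  · rintro (rfl | rfl | rfl)
    · exact ⟨nofun, .inr (.wy v i)⟩
    · exact ⟨nofun, .inl (.yz1 v i)⟩
    · exact ⟨nofun, .inl (.yz2 v i)⟩

theorem neighborSet_w (v : V) :
    (CalG G).neighborSet (.w v) = .orig '' {u | closedNbr G v u} ∪ Set.range (.y v) := by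
  ext c
  simp only [SimpleGraph.mem_neighborSet, calG_adj, Set.mem_union, Set.mem_image,
    Set.mem_range, Set.mem_ofPred_eq]
  constructor
  · rintro ⟨-, h | h⟩
    · cases h with
      | wu _ u hu => exact .inl ⟨u, hu, rfl⟩
      | wy _ i => exact .inr ⟨i, rfl⟩
    · cases h
  · rintro (⟨u, hu, rfl⟩ | ⟨i, rfl⟩)
    · exact ⟨nofun, .inl (.wu v u hu)⟩
    · exact ⟨nofun, .inl (.wy v i)⟩

theorem neighborSet_orig (v : V) :
    (CalG G).neighborSet (.orig v) = Set.range (.x v) ∪ .w '' {u | closedNbr G v u} := by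
  ext c
  simp only [SimpleGraph.mem_neighborSet, calG_adj, Set.mem_union, Set.mem_image,
    Set.mem_range, Set.mem_ofPred_eq]
  constructor
  · rintro ⟨-, h | h⟩
    · cases h with
      | vx _ i => exact .inl ⟨i, rfl⟩
    · cases h with
      | wu u _ hu => exact .inr ⟨u, closedNbr_comm.1 hu, rfl⟩
  · rintro (⟨i, rfl⟩ | ⟨u, hu, rfl⟩)
    · exact ⟨nofun, .inl (.vx v i)⟩
    · exact ⟨nofun, .inr (.wu u v (closedNbr_comm.1 hu))⟩

theorem ncard_range_y (v : V) : (Set.range (CalV.y (G := G) v)).ncard = deg G v := by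
  rw [Set.ncard_range_of_injective fun _ _ h => by injection h, Nat.card_eq_fintype_card,
    Fintype.card_fin]

theorem ncard_range_x (v : V) : (Set.range (CalV.x (G := G) v)).ncard = deg G v := by
  rw [Set.ncard_range_of_injective fun _ _ h => by injection h, Nat.card_eq_fintype_card,
    Fintype.card_fin]

variable [Finite V]

theorem ncard_neighborSet_w (v : V) : ((CalG G).neighborSet (.w v)).ncard = 2 * deg G v + 1 := by
  rw [neighborSet_w, Set.ncard_union_eq (by simp [Set.disjoint_left]),
    Set.ncard_image_of_injective _ fun _ _ h => by injection h, ncard_setOf_closedNbr,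
    ncard_range_y]
  ring

theorem ncard_neighborSet_orig (v : V) :
    ((CalG G).neighborSet (.orig v)).ncard = 2 * deg G v + 1 := by
  rw [neighborSet_orig, Set.ncard_union_eq (by simp [Set.disjoint_left]), ncard_range_x,
    Set.ncard_image_of_injective _ fun _ _ h => by injection h, ncard_setOf_closedNbr]
  ring

variable {S : Set (CalV G)}

theorem y_mem_strictClosure (hz₁ : .z1 ∈ strictClosure (CalG G) S)
    (hz₂ : .z2 ∈ strictClosure (CalG G) S) (v : V) (i : Fin (deg G v)) :
    .y v i ∈ strictClosure (CalG G) S := by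
  refine mem_strictClosure_of_lt_ncard (A := {.z1, .z2}) (Set.toFinite _) ?_
    (Set.pair_subset hz₁ hz₂) ?_
  · rw [neighborSet_y]
    exact Set.subset_insert _ _
  · rw [neighborSet_y, Set.ncard_insert_of_notMem (by simp), Set.ncard_pair (by simp)]
    omega

theorem w_mem_strictClosure {v u : V} (hvu : closedNbr G v u)
    (hu : .orig u ∈ strictClosure (CalG G) S) (hy : ∀ i, .y v i ∈ strictClosure (CalG G) S) :
    .w v ∈ strictClosure (CalG G) S := by
  refine mem_strictClosure_of_lt_ncard (A := insert (.orig u) (Set.range (.y v)))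
    (Set.toFinite _) ?_ (Set.insert_subset hu (Set.range_subset_iff.2 hy)) ?_
  · rw [neighborSet_w]
    exact Set.insert_subset (.inl ⟨u, hvu, rfl⟩) Set.subset_union_right
  · rw [ncard_neighborSet_w, Set.ncard_insert_of_notMem (by simp), ncard_range_y]
    omega

theorem orig_mem_strictClosure {v : V}
    (hw : ∀ u, closedNbr G v u → .w u ∈ strictClosure (CalG G) S) :
    .orig v ∈ strictClosure (CalG G) S := by
  refine mem_strictClosure_of_lt_ncard (A := .w '' {u | closedNbr G v u})
    (Set.toFinite _) ?_ (Set.image_subset_iff.2 hw) ?_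
  · rw [neighborSet_orig]
    exact Set.subset_union_right
  · rw [ncard_neighborSet_orig, Set.ncard_image_of_injective _ fun _ _ h => by injection h,
      ncard_setOf_closedNbr]
    omega

end CalG

/-- Lemma: if `D` is a dominating set of `G`, then `D ∪ {z₁, z₂}` is an
irreversible dynamo of `𝒢` under the strict-majority scenario. -/
theorem stmt16 {V : Type*} [Fintype V] (G : SimpleGraph V) (D : Set V)
    (hD : ∀ v : V, ∃ u ∈ D, closedNbr G v u) :
    strictClosure (CalG G)
        ((fun v => CalV.orig v) '' D ∪ {CalV.z1, CalV.z2}) = Set.univ := by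
  set S : Set (CalV G) := (fun v => CalV.orig v) '' D ∪ {CalV.z1, CalV.z2}
  have hS : S ⊆ strictClosure (CalG G) S := subset_strictClosure
  have hz₁ : CalV.z1 ∈ strictClosure (CalG G) S := hS (.inr (.inl rfl))
  have hz₂ : CalV.z2 ∈ strictClosure (CalG G) S := hS (.inr (.inr rfl))
  have hy := y_mem_strictClosure hz₁ hz₂
  have hw (v : V) : CalV.w v ∈ strictClosure (CalG G) S := by
    obtain ⟨u, huD, hvu⟩ := hD v
    exact w_mem_strictClosure hvu (hS (.inl ⟨u, huD, rfl⟩)) (hy v)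
  have horig (v : V) : CalV.orig v ∈ strictClosure (CalG G) S :=
    orig_mem_strictClosure fun u _ => hw u
  refine Set.eq_univ_of_forall fun c => ?_
  cases c with
  | orig v => exact horig v
  | w v => exact hw v
  | x v i => exact mem_strictClosure_of_neighborSet_eq_singleton (neighborSet_x v i) (horig v)
  | y v i => exact hy v i
  | z1 => exact hz₁
  | z2 => exact hz₂
  | g1 => exact mem_strictClosure_of_neighborSet_eq_singleton neighborSet_g1 hz₁
  | g2 => exact mem_strictClosure_of_neighborSet_eq_singleton neighborSet_g2 hz₂
end

section
/- Let G(V,E) be a finite simple undirected graph and let 𝒢(𝒱,ℰ) be the graph constructed from G as described. For each v ∈ V, every set S ⊆ 𝒱 with c(S, 𝒢, φ^strict) = 𝒱 satisfies S ∩ B_v ≠ ∅, where B_v = {w_v} ∪ N*_G(v) ∪ ⋃_{u∈N*_G(v)} 𝒳_u. -/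
/-- `B_v = {w_v} ∪ N*_G(v) ∪ ⋃_{u ∈ N*_G(v)} 𝒳_u`, as a set of vertices of
`𝒢`. -/
def Bset {V : Type*} (G : SimpleGraph V) (v : V) : Set (CalV G) :=
  {CalV.w v} ∪ {a | ∃ u, closedNbr G v u ∧ a = CalV.orig u}
    ∪ {a | ∃ u, closedNbr G v u ∧ ∃ i : Fin (deg G u), a = CalV.x u i}

/-! The complement of `B_v` is closed under the strict-majority rule: `w_v` and each
`u ∈ N*_G(v)` have `2 deg + 1` neighbours of which at most `deg` (the `y`'s of `w_v`, resp.
the `w_t` with `t ≠ v`) lie outside `B_v`, and the only neighbour of `x ∈ 𝒳_u` lies in `B_v`.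
So a seed set avoiding `B_v` never colours `w_v`. -/

def IsStrictMajorityClosed {W : Type*} (H : SimpleGraph W) (T : Set W) : Prop :=
  ∀ a, (H.neighborSet a).ncard < 2 * (H.neighborSet a ∩ T).ncard → a ∈ T

section StrictClosure

variable {W : Type*} {H : SimpleGraph W} {S T B : Set W}

lemma strictClosure_subset (hST : S ⊆ T) (hT : IsStrictMajorityClosed H T) :
    strictClosure H S ⊆ T :=
  Set.sInter_subset_of_mem ⟨hST, hT⟩

lemma isStrictMajorityClosed_compl
    (hB : ∀ a ∈ B, 2 * (H.neighborSet a \ B).ncard ≤ (H.neighborSet a).ncard) :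
    IsStrictMajorityClosed H Bᶜ := by
  intro a ha haB
  have := hB a haB
  rw [Set.sdiff_eq] at this
  omega

lemma inter_nonempty_of_strictClosure_eq_univ (hS : strictClosure H S = Set.univ)
    (hB : IsStrictMajorityClosed H Bᶜ) (hne : B.Nonempty) : (S ∩ B).Nonempty := by
  by_contra hSB
  have hSBc : S ⊆ Bᶜ := fun a haS haB => hSB ⟨a, haS, haB⟩
  obtain ⟨b, hb⟩ := hne
  have hb' : b ∈ strictClosure H S := hS ▸ Set.mem_univ b
  exact strictClosure_subset hSBc hB hb' hb

end StrictClosure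

namespace CalG

variable {V : Type*} {G : SimpleGraph V}

lemma closedNbr_comm {v u : V} : closedNbr G v u ↔ closedNbr G u v := by
  rw [closedNbr, closedNbr, G.adj_comm, eq_comm]

lemma ncard_setOf_closedNbr [Finite V] (v : V) :
    {u | closedNbr G v u}.ncard = deg G v + 1 := by
  have h : {u | closedNbr G v u} = insert v (G.neighborSet v) := by
    ext u
    simp [closedNbr, or_comm, eq_comm]
  rw [h, Set.ncard_insert_of_notMem (by simp)]
  rfl

lemma ncard_range_x (v : V) : (Set.range (CalV.x (G := G) v)).ncard = deg G v := by
  rw [Set.ncard_range_of_injective (fun i j h => eq_of_heq (CalV.x.inj h).2), Nat.card_fin]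

lemma ncard_range_y (v : V) : (Set.range (CalV.y (G := G) v)).ncard = deg G v := by
  rw [Set.ncard_range_of_injective (fun i j h => eq_of_heq (CalV.y.inj h).2), Nat.card_fin]

lemma neighborSet_w (v : V) :
    (CalG G).neighborSet (.w v) =
      CalV.orig '' {u | closedNbr G v u} ∪ Set.range (CalV.y (G := G) v) := by
  ext a
  simp only [SimpleGraph.mem_neighborSet, CalG, SimpleGraph.fromRel_adj,
    Set.mem_union, Set.mem_image, Set.mem_range, Set.mem_ofPred_eq]
  constructor
  · rintro ⟨-, h | h⟩
    · cases h with
      | wu v u hu => exact Or.inl ⟨u, hu, rfl⟩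
      | wy v i => exact Or.inr ⟨i, rfl⟩
    · cases h
  · rintro (⟨u, hu, rfl⟩ | ⟨i, rfl⟩)
    · exact ⟨by simp, Or.inl (.wu v u hu)⟩
    · exact ⟨by simp, Or.inl (.wy v i)⟩

lemma neighborSet_orig (u : V) :
    (CalG G).neighborSet (.orig u) =
      Set.range (CalV.x (G := G) u) ∪ CalV.w '' {t | closedNbr G u t} := by
  ext a
  simp only [SimpleGraph.mem_neighborSet, CalG, SimpleGraph.fromRel_adj,
    Set.mem_union, Set.mem_image, Set.mem_range, Set.mem_ofPred_eq]
  constructor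
  · rintro ⟨-, h | h⟩
    · cases h with
      | vx v i => exact Or.inl ⟨i, rfl⟩
    · cases h with
      | wu t u ht => exact Or.inr ⟨t, closedNbr_comm.mp ht, rfl⟩
  · rintro (⟨i, rfl⟩ | ⟨t, ht, rfl⟩)
    · exact ⟨by simp, Or.inl (.vx u i)⟩
    · exact ⟨by simp, Or.inr (.wu t u (closedNbr_comm.mp ht))⟩

lemma neighborSet_x (u : V) (i : Fin (deg G u)) :
    (CalG G).neighborSet (.x u i) = {.orig u} := by
  ext a
  simp only [SimpleGraph.mem_neighborSet, CalG, SimpleGraph.fromRel_adj,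
    Set.mem_singleton_iff]
  constructor
  · rintro ⟨-, h | h⟩
    · cases h
    · cases h
      rfl
  · rintro rfl
    exact ⟨by simp, Or.inr (.vx u i)⟩

lemma w_mem_Bset (v : V) : CalV.w v ∈ Bset G v := .inl (.inl rfl)

lemma orig_mem_Bset {v u : V} (h : closedNbr G v u) : CalV.orig u ∈ Bset G v :=
  .inl (.inr ⟨u, h, rfl⟩)

lemma x_mem_Bset {v u : V} (h : closedNbr G v u) (i : Fin (deg G u)) :
    CalV.x u i ∈ Bset G v :=
  .inr ⟨u, h, i, rfl⟩

lemma ncard_neighborSet_w_diff_Bset_le (v : V) :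
    ((CalG G).neighborSet (.w v) \ Bset G v).ncard ≤ deg G v := by
  have hsub : (CalG G).neighborSet (.w v) \ Bset G v ⊆ Set.range (CalV.y v) := by
    rw [neighborSet_w]
    rintro _ ⟨⟨u, hu, rfl⟩ | hy, hB⟩
    · exact absurd (orig_mem_Bset hu) hB
    · exact hy
  exact (Set.ncard_le_ncard hsub).trans_eq (ncard_range_y v)

variable [Finite V]

lemma ncard_neighborSet_w (v : V) :
    ((CalG G).neighborSet (.w v)).ncard = 2 * deg G v + 1 := by
  have hdisj : Disjoint (CalV.orig '' {u | closedNbr G v u}) (Set.range (CalV.y (G := G) v)) :=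
    Set.disjoint_left.mpr (by rintro _ ⟨u, -, rfl⟩ ⟨i, h⟩; cases h)
  rw [neighborSet_w, Set.ncard_union_eq hdisj,
    Set.ncard_image_of_injective _ fun _ _ h => CalV.orig.inj h, ncard_setOf_closedNbr,
    ncard_range_y]
  ring

lemma ncard_neighborSet_orig (u : V) :
    ((CalG G).neighborSet (.orig u)).ncard = 2 * deg G u + 1 := by
  have hdisj : Disjoint (Set.range (CalV.x (G := G) u)) (CalV.w '' {t | closedNbr G u t}) :=
    Set.disjoint_left.mpr (by rintro _ ⟨i, rfl⟩ ⟨t, -, h⟩; cases h)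
  rw [neighborSet_orig, Set.ncard_union_eq hdisj, ncard_range_x,
    Set.ncard_image_of_injective _ fun _ _ h => CalV.w.inj h, ncard_setOf_closedNbr]
  ring

lemma ncard_neighborSet_orig_diff_Bset_le {v u : V} (hu : closedNbr G v u) :
    ((CalG G).neighborSet (.orig u) \ Bset G v).ncard ≤ deg G u := by
  have hsub : (CalG G).neighborSet (.orig u) \ Bset G v ⊆
      CalV.w '' {t | closedNbr G u t} \ {.w v} := by
    rw [neighborSet_orig]
    rintro _ ⟨⟨i, rfl⟩ | ht, hB⟩
    · exact absurd (x_mem_Bset hu i) hB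
    · exact ⟨ht, by rintro rfl; exact hB (w_mem_Bset v)⟩
  have hwv : CalV.w v ∈ CalV.w (G := G) '' {t | closedNbr G u t} :=
    ⟨v, closedNbr_comm.mp hu, rfl⟩
  calc _ ≤ (CalV.w (G := G) '' {t | closedNbr G u t} \ {.w v}).ncard :=
        Set.ncard_le_ncard hsub
    _ = deg G u := by
      rw [Set.ncard_sdiff_singleton_of_mem hwv,
        Set.ncard_image_of_injective _ fun _ _ h => CalV.w.inj h, ncard_setOf_closedNbr]
      rfl

lemma two_mul_ncard_neighborSet_diff_Bset_le (v : V) :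
    ∀ a ∈ Bset G v,
      2 * ((CalG G).neighborSet a \ Bset G v).ncard ≤ ((CalG G).neighborSet a).ncard := by
  rintro a ((rfl | ⟨u, hu, rfl⟩) | ⟨u, hu, i, rfl⟩)
  · rw [ncard_neighborSet_w]
    linarith [ncard_neighborSet_w_diff_Bset_le (G := G) v]
  · rw [ncard_neighborSet_orig]
    linarith [ncard_neighborSet_orig_diff_Bset_le hu]
  · have hempty : (CalG G).neighborSet (.x u i) \ Bset G v = ∅ := by
      rw [neighborSet_x, Set.sdiff_eq_empty, Set.singleton_subset_iff]
      exact orig_mem_Bset hu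
    simp [hempty]

end CalG

/-- Lemma: every irreversible dynamo of `𝒢` under the strict-majority
scenario meets `B_v` for each `v ∈ V`. -/
theorem stmt17 {V : Type*} [Fintype V] (G : SimpleGraph V) (v : V)
    (S : Set (CalV G)) (hS : strictClosure (CalG G) S = Set.univ) :
    (S ∩ Bset G v).Nonempty :=
  inter_nonempty_of_strictClosure_eq_univ hS
    (isStrictMajorityClosed_compl (CalG.two_mul_ncard_neighborSet_diff_Bset_le v))
    ⟨_, CalG.w_mem_Bset v⟩
end
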